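/- arXiv:1811.12246 — 5 statements merged into one kernel-verified Lean document; each statement's English description precedes it below -/
import Mathlib

section
/- Let A = U − V be a proper splitting of a group invertible real n×n matrix A. Then U is group invertible, AA# = UU#, and A#A = U#U. -/
open Matrix

/-- `X` is the group inverse of `A`. -/
def IsGroupInv {n : ℕ} (A X : Matrix (Fin n) (Fin n) ℝ) : Prop :=
  A * X * A = A ∧ X * A * X = X ∧ A * X = X * A

/-- Spectral radius of a real matrix: sup of moduli of its complex eigenvalues. -/
noncomputable def specRad {n : ℕ} (A : Matrix (Fin n) (Fin n) ℝ) : ℝ :=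
  sSup ((fun z : ℂ => ‖z‖) '' spectrum ℂ (A.map (algebraMap ℝ ℂ)))

/-- `A = U - V` is a proper splitting: `R(U) = R(A)` and `N(U) = N(A)`. -/
def ProperSplitting {n : ℕ} (A U V : Matrix (Fin n) (Fin n) ℝ) : Prop :=
  A = U - V ∧ LinearMap.range U.mulVecLin = LinearMap.range A.mulVecLin ∧
    LinearMap.ker U.mulVecLin = LinearMap.ker A.mulVecLin

/-- Entrywise nonnegativity of a matrix. -/
def Nonneg {n : ℕ} (M : Matrix (Fin n) (Fin n) ℝ) : Prop :=
  ∀ i j, 0 ≤ M i j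

/-!
For a group-invertible `A`, `P = A A#` is the idempotent projecting onto `R(A)` along `N(A)`.
A proper splitting makes `P` act as the identity on both sides of `U`, i.e. `U P = U = P U`,
and then `X = U + 1 - P` is invertible (it agrees with `U` on `R(A)` and with `1` on `N(A)`).
Hence `U# = X⁻¹ P`, with `U U# = P = U# U`.
-/

theorem exists_groupInverse_of_isUnit_add_one_sub {R : Type*} [Ring R] {P U : R}
    (hP : IsIdempotentElem P) (hUP : U * P = U) (hPU : P * U = U) (hX : IsUnit (U + 1 - P)) :
    ∃ Ui : R, U * Ui * U = U ∧ Ui * U * Ui = Ui ∧ U * Ui = P ∧ Ui * U = P := by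
  obtain ⟨X, hX⟩ := hX
  have hXP : ↑X * P = U := by rw [hX, sub_mul, add_mul, hUP, one_mul, hP.eq, add_sub_cancel_right]
  have hPX : P * ↑X = U := by rw [hX, mul_sub, mul_add, hPU, mul_one, hP.eq, add_sub_cancel_right]
  have hUUi : U * (↑X⁻¹ * P) = P := by rw [← hPX, mul_assoc, X.mul_inv_cancel_left, hP.eq]
  have hUiU : ↑X⁻¹ * P * U = P := by rw [mul_assoc, hPU, ← hXP, X.inv_mul_cancel_left]
  refine ⟨↑X⁻¹ * P, ?_, ?_, hUUi, hUiU⟩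
  · rw [hUUi, hPU]
  · rw [mul_assoc, hUUi, mul_assoc, hP.eq]

namespace Matrix

variable {m K : Type*} [Fintype m]

theorem mul_eq_self_of_ker_le [CommRing K] {A U E : Matrix m m K}
    (hker : LinearMap.ker A.mulVecLin ≤ LinearMap.ker U.mulVecLin) (hAE : A * E = A) :
    U * E = U := by
  refine ext_iff_mulVec.mpr fun x => ?_
  have hAx : A *ᵥ (E *ᵥ x - x) = 0 := by rw [mulVec_sub, mulVec_mulVec, hAE, sub_self]
  have hUx : U *ᵥ (E *ᵥ x - x) = 0 := hker hAx
  rwa [mulVec_sub, mulVec_mulVec, sub_eq_zero] at hUx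

theorem mul_eq_self_of_range_le [CommRing K] {A U E : Matrix m m K}
    (hrange : LinearMap.range U.mulVecLin ≤ LinearMap.range A.mulVecLin) (hEA : E * A = A) :
    E * U = U := by
  refine ext_iff_mulVec.mpr fun x => ?_
  obtain ⟨y, hy⟩ : U *ᵥ x ∈ LinearMap.range A.mulVecLin := hrange ⟨x, rfl⟩
  rw [mulVecLin_apply] at hy
  rw [← mulVec_mulVec, ← hy, mulVec_mulVec, hEA]

theorem isUnit_add_one_sub [DecidableEq m] [Field K] {P U : Matrix m m K}
    (hP : IsIdempotentElem P) (hPU : P * U = U)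
    (hker : LinearMap.ker U.mulVecLin ≤ LinearMap.ker P.mulVecLin) :
    IsUnit (U + 1 - P) := by
  refine mulVec_injective_iff_isUnit.mp <| (injective_iff_map_eq_zero (U + 1 - P).mulVecLin).mpr
    fun z (hz : (U + 1 - P) *ᵥ z = 0) => ?_
  have hPX : P * (U + 1 - P) = U := by
    rw [mul_sub, mul_add, hPU, mul_one, hP.eq, add_sub_cancel_right]
  have hUz : U *ᵥ z = 0 := by rw [← hPX, ← mulVec_mulVec, hz, mulVec_zero]
  have hPz : P *ᵥ z = 0 := hker hUz
  simpa [sub_mulVec, add_mulVec, hUz, hPz] using hz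

end Matrix

namespace IsGroupInv

variable {n : ℕ} {A Ai : Matrix (Fin n) (Fin n) ℝ}

theorem isIdempotentElem_mul (hA : IsGroupInv A Ai) : IsIdempotentElem (A * Ai) := by
  rw [IsIdempotentElem, ← mul_assoc, hA.1]

theorem mul_mul_eq_self (hA : IsGroupInv A Ai) : A * (A * Ai) = A := by
  rw [hA.2.2, ← mul_assoc, hA.1]

theorem ker_le_ker_mul (hA : IsGroupInv A Ai) :
    LinearMap.ker A.mulVecLin ≤ LinearMap.ker (A * Ai).mulVecLin := by
  intro x (hx : A *ᵥ x = 0)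
  change (A * Ai) *ᵥ x = 0
  rw [hA.2.2, ← mulVec_mulVec, hx, mulVec_zero]

end IsGroupInv

theorem proper_splitting_group_inv {n : ℕ} (A U V Ai : Matrix (Fin n) (Fin n) ℝ)
    (hs : ProperSplitting A U V) (hA : IsGroupInv A Ai) :
    ∃ Ui : Matrix (Fin n) (Fin n) ℝ,
      IsGroupInv U Ui ∧ A * Ai = U * Ui ∧ Ai * A = Ui * U := by
  obtain ⟨-, hrange, hker⟩ := hs
  have hUP : U * (A * Ai) = U := mul_eq_self_of_ker_le hker.ge hA.mul_mul_eq_self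
  have hPU : A * Ai * U = U := mul_eq_self_of_range_le hrange.le hA.1
  have hX : IsUnit (U + 1 - A * Ai) :=
    isUnit_add_one_sub hA.isIdempotentElem_mul hPU (hker.le.trans hA.ker_le_ker_mul)
  obtain ⟨Ui, hUUiU, hUiUUi, hUUi, hUiU⟩ :=
    exists_groupInverse_of_isUnit_add_one_sub hA.isIdempotentElem_mul hUP hPU hX
  exact ⟨Ui, ⟨hUUiU, hUiUUi, hUUi.trans hUiU.symm⟩, hUUi.symm, hA.2.2 ▸ hUiU.symm⟩
end

section
/- Let A = U − V be a proper splitting of a group invertible real n×n matrix A. Then the matrices I − U#V and I − VU# are nonsingular, and A# = (I − U#V)⁻¹U# = U#(I − VU#)⁻¹. -/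
open Matrix

/-! With `P := A * A#`, the inclusions `R(A) ⊆ R(U)` and `N(A) ⊆ N(U)` give `U * U# * A = A`
and `U * P = U`, hence `U * U# = P`. So `A`, `A#`, `U` and `U#` all live in the corner ring
`P R P`, where `U# * A` and `A# * U` are mutually inverse. Since `V = U - A`,
`1 - U# * V = (1 - P) + U# * A`, which is therefore a unit with inverse `(1 - P) + A# * U`, and
`(1 - U# * V) * A# = U#`. The second formula is the same computation in the opposite ring. -/

section Corner

variable {R : Type*} [Ring R]

theorem one_sub_add_mul_one_sub_add {p s t : R} (hp : IsIdempotentElem p) (hpt : p * t = t)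
    (hsp : s * p = s) (hst : s * t = p) : (1 - p + s) * (1 - p + t) = 1 := by
  simp only [mul_add, mul_sub, add_mul, sub_mul, one_mul, mul_one, hp.eq, hpt, hsp, hst]
  abel

theorem isUnit_one_sub_add_of_corner {p s t : R} (hp : IsIdempotentElem p) (hps : p * s = s)
    (hsp : s * p = s) (hpt : p * t = t) (htp : t * p = t) (hst : s * t = p) (hts : t * s = p) :
    IsUnit (1 - p + s) :=
  ⟨⟨1 - p + s, 1 - p + t, one_sub_add_mul_one_sub_add hp hpt hsp hst,
    one_sub_add_mul_one_sub_add hp hps htp hts⟩, rfl⟩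

theorem isUnit_one_sub_mul_and_mul_eq_of_groupInv {a x u y v : R}
    (hax : a * x * a = a) (hxa : x * a * x = x) (hc : a * x = x * a)
    (huy : u * y * u = u) (hyu : y * u * y = y) (hcu : u * y = y * u)
    (hp : u * y = a * x) (hv : a = u - v) :
    IsUnit (1 - y * v) ∧ (1 - y * v) * x = y := by
  set p := a * x
  have hpa : p * a = a := hax
  have hap : a * p = a := by rw [hc, ← mul_assoc, hax]
  have hpx : p * x = x := by rw [hc, hxa]
  have hyp : y * p = y := by rw [← hp, ← mul_assoc, hyu]
  have hpy : p * y = y := by rw [← hp, hcu, hyu]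
  have hpu : p * u = u := by rw [← hp, huy]
  have hup : u * p = u := by rw [← hp, hcu, ← mul_assoc, huy]
  have hsplit : 1 - y * v = 1 - p + y * a := by
    rw [show v = u - a by rw [hv, sub_sub_cancel], mul_sub, ← hcu, hp]
    abel
  refine ⟨hsplit ▸ isUnit_one_sub_add_of_corner (t := x * u) ?_ ?_ ?_ ?_ ?_ ?_ ?_, ?_⟩
  · rw [IsIdempotentElem, ← mul_assoc, hpa]
  · rw [← mul_assoc, hpy]
  · rw [mul_assoc, hap]
  · rw [← mul_assoc, hpx]
  · rw [mul_assoc, hup]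
  · rw [mul_assoc, ← mul_assoc a, hpu, ← hcu, hp]
  · rw [mul_assoc, ← mul_assoc u, hp, hpa, ← hc]
  · rw [hsplit, add_mul, sub_mul, one_mul, hpx, mul_assoc, hyp, sub_self, zero_add]

open MulOpposite in
theorem isUnit_one_sub_mul_and_mul_eq_of_groupInv' {a x u y v : R}
    (hax : a * x * a = a) (hxa : x * a * x = x) (hc : a * x = x * a)
    (huy : u * y * u = u) (hyu : y * u * y = y) (hcu : u * y = y * u)
    (hp : u * y = a * x) (hv : a = u - v) :
    IsUnit (1 - v * y) ∧ x * (1 - v * y) = y := by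
  have key := isUnit_one_sub_mul_and_mul_eq_of_groupInv (a := op a) (x := op x) (u := op u)
    (y := op y) (v := op v)
    (by simp only [← op_mul, ← mul_assoc, hax]) (by simp only [← op_mul, ← mul_assoc, hxa])
    (by rw [← op_mul, ← op_mul, hc])
    (by simp only [← op_mul, ← mul_assoc, huy]) (by simp only [← op_mul, ← mul_assoc, hyu])
    (by rw [← op_mul, ← op_mul, hcu])
    (by rw [← op_mul, ← op_mul, ← hcu, hp, hc]) (by rw [hv, op_sub])
  rw [← op_one, ← op_mul, ← op_sub, isUnit_op, ← op_mul] at key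
  exact ⟨key.1, op_injective key.2⟩

end Corner

section MatrixRangeKer

variable {l m n k R : Type*} [CommSemiring R] [Fintype m] [Fintype n]

theorem Matrix.mul_eq_zero_of_range_le [Fintype k] {A : Matrix m n R} {U : Matrix m k R}
    {M : Matrix l m R}
    (h : LinearMap.range A.mulVecLin ≤ LinearMap.range U.mulVecLin) (hM : M * U = 0) :
    M * A = 0 := by
  refine ext_iff_mulVec.mpr fun x => ?_
  obtain ⟨w, hw⟩ := h ⟨x, rfl⟩
  rw [zero_mulVec, ← mulVec_mulVec, ← show U *ᵥ w = A *ᵥ x from hw, mulVec_mulVec, hM,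
    zero_mulVec]

theorem Matrix.mul_eq_zero_of_ker_le {A : Matrix l m R} {U : Matrix k m R} {M : Matrix m n R}
    (h : LinearMap.ker A.mulVecLin ≤ LinearMap.ker U.mulVecLin) (hM : A * M = 0) :
    U * M = 0 := by
  refine ext_iff_mulVec.mpr fun x => ?_
  have hx : M *ᵥ x ∈ LinearMap.ker A.mulVecLin := by
    rw [LinearMap.mem_ker, mulVecLin_apply, mulVec_mulVec, hM, zero_mulVec]
  rw [← mulVec_mulVec, zero_mulVec, ← mulVecLin_apply]
  exact h hx

end MatrixRangeKer

theorem ProperSplitting.mul_groupInv_eq {n : ℕ} {A U V Ai Ui : Matrix (Fin n) (Fin n) ℝ}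
    (hs : ProperSplitting A U V) (hA : IsGroupInv A Ai) (hU : IsGroupInv U Ui) :
    U * Ui = A * Ai := by
  obtain ⟨hAA, -, hAc⟩ := hA
  obtain ⟨hUU, -, hUc⟩ := hU
  have hUA : U * Ui * A = A := by
    have h := mul_eq_zero_of_range_le hs.2.1.ge (M := 1 - U * Ui)
      (by rw [sub_mul, one_mul, hUU, sub_self])
    rwa [sub_mul, one_mul, sub_eq_zero, eq_comm] at h
  have hAU : U * (A * Ai) = U := by
    have h := mul_eq_zero_of_ker_le hs.2.2.ge (M := 1 - A * Ai)
      (by rw [mul_sub, mul_one, hAc, ← mul_assoc, hAA, sub_self])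
    rwa [mul_sub, mul_one, sub_eq_zero, eq_comm] at h
  calc U * Ui = Ui * (U * (A * Ai)) := by rw [hAU, hUc]
    _ = U * Ui * A * Ai := by rw [← mul_assoc, ← hUc, ← mul_assoc]
    _ = A * Ai := by rw [hUA]

theorem proper_splitting_inverse_formula {n : ℕ} (A U V Ai Ui : Matrix (Fin n) (Fin n) ℝ)
    (hs : ProperSplitting A U V) (hA : IsGroupInv A Ai) (hU : IsGroupInv U Ui) :
    IsUnit (1 - Ui * V) ∧ IsUnit (1 - V * Ui) ∧
    Ai = (1 - Ui * V)⁻¹ * Ui ∧ Ai = Ui * (1 - V * Ui)⁻¹ := by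
  have hP := hs.mul_groupInv_eq hA hU
  obtain ⟨hAA, hAi, hAc⟩ := hA
  obtain ⟨hUU, hUi, hUc⟩ := hU
  obtain ⟨hunit₁, hUi₁⟩ :=
    isUnit_one_sub_mul_and_mul_eq_of_groupInv hAA hAi hAc hUU hUi hUc hP hs.1
  obtain ⟨hunit₂, hUi₂⟩ :=
    isUnit_one_sub_mul_and_mul_eq_of_groupInv' hAA hAi hAc hUU hUi hUc hP hs.1
  refine ⟨hunit₁, hunit₂, ?_, ?_⟩
  · rw [← nonsing_inv_mul_cancel_left _ Ai ((isUnit_iff_isUnit_det _).mp hunit₁), hUi₁]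
  · rw [← mul_nonsing_inv_cancel_right _ Ai ((isUnit_iff_isUnit_det _).mp hunit₂), hUi₂]
end

section
/- Let A = U − V be a proper G-regular splitting of a group invertible real n×n matrix A. Then A# ≥ 0 (entrywise) if and only if ρ(U#V) < 1. -/
open Matrix

open Filter Topology Finset

section Aux

variable {n : ℕ}

attribute [local instance] Matrix.linftyOpNormedRing Matrix.linftyOpNormedAlgebra

noncomputable local instance : CompleteSpace (Matrix (Fin n) (Fin n) ℂ) :=
  FiniteDimensional.complete ℂ _

lemma GReg.nonneg_mul {M N : Matrix (Fin n) (Fin n) ℝ} (hM : Nonneg M) (hN : Nonneg N) :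
    Nonneg (M * N) := by
  intro i j
  rw [Matrix.mul_apply]
  exact Finset.sum_nonneg fun k _ => mul_nonneg (hM i k) (hN k j)

lemma GReg.nonneg_pow {M : Matrix (Fin n) (Fin n) ℝ} (hM : Nonneg M) (k : ℕ) :
    Nonneg (M ^ k) := by
  induction k with
  | zero =>
    intro i j
    simp only [pow_zero, Matrix.one_apply]
    split <;> norm_num
  | succ m ih =>
    rw [pow_succ]
    exact GReg.nonneg_mul ih hM

lemma GReg.entry_norm_le (M : Matrix (Fin n) (Fin n) ℂ) (i j : Fin n) : ‖M i j‖ ≤ ‖M‖ := by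
  have h1 : ‖M i j‖₊ ≤ ‖M‖₊ := by
    rw [Matrix.linfty_opNNNorm_def]
    exact le_trans (Finset.single_le_sum (f := fun j => ‖M i j‖₊) (fun k _ => zero_le)
      (Finset.mem_univ j)) (Finset.le_sup (f := fun i => ∑ j, ‖M i j‖₊) (Finset.mem_univ i))
  exact_mod_cast h1

lemma GReg.norm_le_sum_entries (M : Matrix (Fin n) (Fin n) ℂ) : ‖M‖ ≤ ∑ i, ∑ j, ‖M i j‖ := by
  have h1 : ‖M‖₊ ≤ ∑ i, ∑ j, ‖M i j‖₊ := by
    rw [Matrix.linfty_opNNNorm_def]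
    exact Finset.sup_le fun i _ =>
      Finset.single_le_sum (f := fun i => ∑ j, ‖M i j‖₊) (fun k _ => zero_le) (Finset.mem_univ i)
  have := NNReal.coe_le_coe.mpr h1
  simpa [NNReal.coe_sum] using this

lemma GReg.map_pow_entries (W : Matrix (Fin n) (Fin n) ℝ) (m : ℕ) :
    (W.map (algebraMap ℝ ℂ)) ^ m = (W ^ m).map (algebraMap ℝ ℂ) := by
  have := map_pow ((algebraMap ℝ ℂ).mapMatrix) W m
  simpa [RingHom.mapMatrix_apply] using this.symm

lemma GReg.norm_pow_tendsto (hn : 0 < n) {W : Matrix (Fin n) (Fin n) ℝ}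
    (h : specRad W < 1) :
    Tendsto (fun m : ℕ => ‖(W.map (algebraMap ℝ ℂ)) ^ m‖) atTop (𝓝 0) := by
  haveI : Nonempty (Fin n) := ⟨⟨0, hn⟩⟩
  set Wc := W.map (algebraMap ℝ ℂ) with hWc
  have hbdd : BddAbove ((fun z : ℂ => ‖z‖) '' spectrum ℂ Wc) := by
    refine ⟨‖Wc‖, ?_⟩
    rintro y ⟨k, hk, rfl⟩
    exact spectrum.norm_le_norm_of_mem hk
  have hlam : ∀ k ∈ spectrum ℂ Wc, ‖k‖ ≤ specRad W := fun k hk =>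
    le_csSup hbdd ⟨k, hk, rfl⟩
  set r : ℝ := max (specRad W) 0 with hrdef
  have hr0 : 0 ≤ r := le_max_right _ _
  have hr1 : r < 1 := max_lt h one_pos
  set r' : ℝ := (r + 1) / 2 with hr'def
  have hr'0 : 0 < r' := by positivity
  have hrr' : r < r' := by simp only [hr'def]; linarith
  have hr'1 : r' < 1 := by simp only [hr'def]; linarith
  have hsr : spectralRadius ℂ Wc ≤ ENNReal.ofReal r := by
    rw [spectralRadius]
    refine iSup₂_le fun k hk => ?_
    rw [← enorm_eq_nnnorm, ← ofReal_norm]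
    exact ENNReal.ofReal_le_ofReal ((hlam k hk).trans (le_max_left _ _))
  have hlt : spectralRadius ℂ Wc < ENNReal.ofReal r' :=
    lt_of_le_of_lt hsr ((ENNReal.ofReal_lt_ofReal_iff hr'0).mpr hrr')
  have hev : ∀ᶠ m : ℕ in atTop, (‖Wc ^ m‖₊ : ENNReal) ^ (1 / (m:ℝ)) < ENNReal.ofReal r' :=
    (spectrum.pow_nnnorm_pow_one_div_tendsto_nhds_spectralRadius Wc).eventually_lt_const hlt
  have hbound : ∀ᶠ m : ℕ in atTop, ‖Wc ^ m‖ ≤ r' ^ m := by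
    filter_upwards [hev, eventually_ge_atTop 1] with m hm hm1
    have hmne : (m : ℝ) ≠ 0 := Nat.cast_ne_zero.mpr (Nat.one_le_iff_ne_zero.mp hm1)
    have h2 : ((‖Wc ^ m‖₊ : ENNReal) ^ (1 / (m:ℝ))) ^ (m:ℝ) ≤ (ENNReal.ofReal r') ^ (m:ℝ) :=
      ENNReal.rpow_le_rpow hm.le (by positivity)
    rw [← ENNReal.rpow_mul, one_div_mul_cancel hmne, ENNReal.rpow_one] at h2
    rw [ENNReal.ofReal_rpow_of_pos hr'0] at h2
    rw [← enorm_eq_nnnorm, ← ofReal_norm] at h2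
    have := (ENNReal.ofReal_le_ofReal_iff (by positivity)).mp h2
    rwa [Real.rpow_natCast] at this
  refine squeeze_zero' (Eventually.of_forall fun m => norm_nonneg _) hbound ?_
  exact tendsto_pow_atTop_nhds_zero_of_lt_one hr'0.le hr'1

lemma GReg.specRad_lt_one_of_pow_tendsto (hn : 0 < n) {W : Matrix (Fin n) (Fin n) ℝ}
    (h : ∀ i j, Tendsto (fun m : ℕ => (W ^ m) i j) atTop (𝓝 0)) :
    specRad W < 1 := by
  haveI : Nonempty (Fin n) := ⟨⟨0, hn⟩⟩
  set Wc := W.map (algebraMap ℝ ℂ) with hWc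
  have hnorm0 : Tendsto (fun m : ℕ => ‖Wc ^ m‖) atTop (𝓝 0) := by
    have hb : ∀ m : ℕ, ‖Wc ^ m‖ ≤ ∑ i, ∑ j, |(W ^ m) i j| := by
      intro m
      refine (GReg.norm_le_sum_entries _).trans (le_of_eq ?_)
      refine Finset.sum_congr rfl fun i _ => Finset.sum_congr rfl fun j _ => ?_
      rw [GReg.map_pow_entries]
      simp [Matrix.map_apply, Complex.norm_real, Real.norm_eq_abs]
    have hsum : Tendsto (fun m : ℕ => ∑ i, ∑ j, |(W ^ m) i j|) atTop (𝓝 0) := by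
      have : Tendsto (fun m : ℕ => ∑ i : Fin n, ∑ j : Fin n, |(W ^ m) i j|) atTop
          (𝓝 (∑ i : Fin n, ∑ j : Fin n, (0:ℝ))) := by
        refine tendsto_finset_sum _ fun i _ => tendsto_finset_sum _ fun j _ => ?_
        simpa using (h i j).abs
      simpa using this
    exact squeeze_zero (fun m => norm_nonneg _) hb hsum
  obtain ⟨m, hm1, hmlt⟩ : ∃ m : ℕ, 1 ≤ m ∧ ‖Wc ^ m‖ < 1 := by
    have := (hnorm0.eventually_lt_const one_pos).and (eventually_ge_atTop 1)
    obtain ⟨m, hm⟩ := this.exists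
    exact ⟨m, hm.2, hm.1⟩
  set c : ℝ := ‖Wc ^ m‖ ^ ((m : ℝ)⁻¹) with hc
  have hc0 : 0 ≤ c := Real.rpow_nonneg (norm_nonneg _) _
  have hc1 : c < 1 := by
    refine Real.rpow_lt_one (norm_nonneg _) hmlt ?_
    positivity
  have hcm : c ^ m = ‖Wc ^ m‖ :=
    Real.rpow_inv_natCast_pow (norm_nonneg _) (Nat.one_le_iff_ne_zero.mp hm1)
  have hkey : ∀ k ∈ spectrum ℂ Wc, ‖k‖ ≤ c := by
    intro k hk
    have hpow : k ^ m ∈ spectrum ℂ (Wc ^ m) := by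
      have := spectrum.subset_polynomial_aeval Wc (Polynomial.X ^ m : Polynomial ℂ)
      have hmem : k ^ m ∈ (fun x => Polynomial.eval x ((Polynomial.X : Polynomial ℂ) ^ m)) ''
          spectrum ℂ Wc := ⟨k, hk, by simp⟩
      simpa using this hmem
    have hle : ‖k ^ m‖ ≤ ‖Wc ^ m‖ := spectrum.norm_le_norm_of_mem hpow
    rw [norm_pow, ← hcm] at hle
    by_contra hlt
    push_neg at hlt
    have := pow_lt_pow_left₀ hlt hc0 (Nat.one_le_iff_ne_zero.mp hm1)
    linarith
  refine lt_of_le_of_lt (Real.sSup_le ?_ hc0) hc1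
  rintro x ⟨k, hk, rfl⟩
  exact hkey k hk

lemma GReg.specRad_of_zero (hn : n = 0) (W : Matrix (Fin n) (Fin n) ℝ) : specRad W < 1 := by
  subst hn
  have hs : spectrum ℂ (W.map (algebraMap ℝ ℂ)) = ∅ := by
    ext z
    simp [spectrum.mem_iff, isUnit_of_subsingleton]
  rw [specRad, hs]
  simp [Real.sSup_empty]

lemma GReg.proj_eq {A U Ai Ui : Matrix (Fin n) (Fin n) ℝ}
    (hA : IsGroupInv A Ai) (hU : IsGroupInv U Ui)
    (hr : LinearMap.range U.mulVecLin = LinearMap.range A.mulVecLin)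
    (hk : LinearMap.ker U.mulVecLin = LinearMap.ker A.mulVecLin) :
    U * Ui = A * Ai := by
  obtain ⟨hA1, hA2, hA3⟩ := hA
  obtain ⟨hU1, hU2, hU3⟩ := hU
  have hx : ∀ x : Fin n → ℝ, (U * Ui) *ᵥ x = (A * Ai) *ᵥ x := by
    intro x
    have hmem : (A * Ai) *ᵥ x ∈ LinearMap.range A.mulVecLin :=
      ⟨Ai *ᵥ x, by simp [mulVecLin_apply, mulVec_mulVec]⟩
    rw [← hr] at hmem
    obtain ⟨y, hy⟩ := hmem
    rw [mulVecLin_apply] at hy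
    have step1 : (U * Ui) *ᵥ ((A * Ai) *ᵥ x) = (A * Ai) *ᵥ x := by
      rw [← hy, mulVec_mulVec, hU1]
    have hker : x - (A * Ai) *ᵥ x ∈ LinearMap.ker A.mulVecLin := by
      rw [LinearMap.mem_ker, mulVecLin_apply, mulVec_sub, mulVec_mulVec, ← mul_assoc,
        show A * A * Ai = A by rw [mul_assoc, hA3, ← mul_assoc, hA1], sub_self]
    rw [← hk, LinearMap.mem_ker, mulVecLin_apply] at hker
    have step2 : (U * Ui) *ᵥ (x - (A * Ai) *ᵥ x) = 0 := by
      rw [hU3, ← mulVec_mulVec, hker, mulVec_zero]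
    have := congrArg₂ (· + ·) step2 step1
    simpa [mulVec_sub, sub_add_cancel] using this
  ext i j
  have := congrFun (hx (Pi.single j 1)) i
  simpa [mulVec_single_one] using this

lemma GReg.key_ids {A U V Ai Ui : Matrix (Fin n) (Fin n) ℝ}
    (hA : IsGroupInv A Ai) (hU : IsGroupInv U Ui)
    (hP : U * Ui = A * Ai) (hVdef : V = U - A) :
    Ui * V * Ai = Ai - Ui ∧ Ai * V * Ui = Ai - Ui ∧ (1 - Ui * V) * Ai = Ui := by
  obtain ⟨hA1, hA2, hA3⟩ := hA
  obtain ⟨hU1, hU2, hU3⟩ := hU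
  have e1 : Ui * U * Ai = Ai := by
    rw [← hU3, hP, hA3, hA2]
  have e2 : Ui * A * Ai = Ui := by
    rw [mul_assoc, ← hP, ← mul_assoc, hU2]
  have k1 : Ui * V * Ai = Ai - Ui := by
    rw [hVdef, mul_sub, sub_mul, e1, e2]
  have e3 : Ai * U * Ui = Ai := by
    rw [mul_assoc, hP, ← mul_assoc, hA2]
  have e4 : Ai * A * Ui = Ui := by
    rw [← hA3, ← hP, hU3, hU2]
  have k2 : Ai * V * Ui = Ai - Ui := by
    rw [hVdef, mul_sub, sub_mul, e3, e4]
  have k3 : (1 - Ui * V) * Ai = Ui := by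
    rw [sub_mul, one_mul, mul_assoc, ← mul_assoc Ui V Ai, k1]
    abel
  exact ⟨k1, k2, k3⟩

theorem G_regular_convergence {n : ℕ} (A U V Ai Ui : Matrix (Fin n) (Fin n) ℝ)
    (hs : ProperSplitting A U V) (hA : IsGroupInv A Ai) (hU : IsGroupInv U Ui)
    (hUi : Nonneg Ui) (hV : Nonneg V) :
    Nonneg Ai ↔ specRad (Ui * V) < 1 := by
  obtain ⟨hAUV, hrange, hker⟩ := hs
  have hVdef : V = U - A := by rw [hAUV]; abel
  have hP : U * Ui = A * Ai := GReg.proj_eq hA hU hrange hker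
  obtain ⟨k1, k2, k3⟩ := GReg.key_ids hA hU hP hVdef
  set W : Matrix (Fin n) (Fin n) ℝ := Ui * V with hWdef
  have hW : Nonneg W := GReg.nonneg_mul hUi hV
  rcases Nat.eq_zero_or_pos n with hn | hn
  · constructor
    · intro _
      exact GReg.specRad_of_zero hn W
    · intro _ i j
      exact absurd i.2 (by omega)
  constructor
  · -- Nonneg Ai → specRad < 1
    intro hAi
    set T : Matrix (Fin n) (Fin n) ℝ := Ai * V with hTdef
    have hT : Nonneg T := GReg.nonneg_mul hAi hV
    have hWT : W * T = T - W := by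
      rw [hWdef, hTdef, ← mul_assoc, k1, sub_mul]
    have hpowt : ∀ i j, Tendsto (fun m : ℕ => (W ^ m) i j) atTop (𝓝 0) := by
      intro i j
      set a : ℕ → ℝ := fun m => (∑ k ∈ Finset.range m, W ^ k) i j with hadef
      have hstep : ∀ m, a (m + 1) = a m + (W ^ m) i j := by
        intro m
        simp only [hadef, Finset.sum_range_succ, Matrix.add_apply]
      have hmono : Monotone a :=
        monotone_nat_of_le_succ fun m => by
          rw [hstep]
          linarith [GReg.nonneg_pow hW m i j]
      have hSid : ∀ m : ℕ, (∑ k ∈ Finset.range m, W ^ k) = (1 + T) - W ^ m * (1 + T) := by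
        intro m
        have hgeom : (∑ k ∈ Finset.range m, W ^ k) * (1 - W) = 1 - W ^ m := by
          have := geom_sum_mul W m
          have h2 : (∑ k ∈ Finset.range m, W ^ k) * (1 - W)
              = -((∑ k ∈ Finset.range m, W ^ k) * (W - 1)) := by noncomm_ring
          rw [h2, this]
          abel
        have hinv : (1 - W) * (1 + T) = 1 := by
          rw [mul_add, mul_one, sub_mul, one_mul, hWT]
          abel
        calc (∑ k ∈ Finset.range m, W ^ k)
            = (∑ k ∈ Finset.range m, W ^ k) * ((1 - W) * (1 + T)) := by rw [hinv, mul_one]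
          _ = ((∑ k ∈ Finset.range m, W ^ k) * (1 - W)) * (1 + T) := by rw [mul_assoc]
          _ = (1 - W ^ m) * (1 + T) := by rw [hgeom]
          _ = (1 + T) - W ^ m * (1 + T) := by noncomm_ring
      have hbddA : BddAbove (Set.range a) := by
        refine ⟨(1 + T) i j, ?_⟩
        rintro x ⟨m, rfl⟩
        have h1 : a m = (1 + T) i j - (W ^ m * (1 + T)) i j := by
          rw [hadef]
          simp only [hSid m, Matrix.sub_apply]
        have h2 : 0 ≤ (W ^ m * (1 + T)) i j := by
          refine GReg.nonneg_mul (GReg.nonneg_pow hW m) ?_ i j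
          intro i' j'
          simp only [Matrix.add_apply, Matrix.one_apply]
          have := hT i' j'
          split <;> linarith
        rw [h1]
        linarith
      have hlim : Tendsto a atTop (𝓝 (⨆ m, a m)) := tendsto_atTop_ciSup hmono hbddA
      have hlim1 : Tendsto (fun m => a (m + 1)) atTop (𝓝 (⨆ m, a m)) :=
        hlim.comp (tendsto_add_atTop_nat 1)
      have := hlim1.sub hlim
      rw [sub_self] at this
      refine this.congr fun m => ?_
      rw [hstep]
      ring
    exact GReg.specRad_lt_one_of_pow_tendsto hn hpowt
  · -- specRad < 1 → Nonneg Ai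
    intro hrad
    have hWc := GReg.norm_pow_tendsto hn hrad
    -- 1 - W is invertible
    haveI : Nonempty (Fin n) := ⟨⟨0, hn⟩⟩
    set Wc := W.map (algebraMap ℝ ℂ) with hWcdef
    have hbdd : BddAbove ((fun z : ℂ => ‖z‖) '' spectrum ℂ Wc) := by
      refine ⟨‖Wc‖, ?_⟩
      rintro y ⟨k, hk, rfl⟩
      exact spectrum.norm_le_norm_of_mem hk
    have hone : (1 : ℂ) ∉ spectrum ℂ Wc := by
      intro hmem
      have : ‖(1:ℂ)‖ ≤ specRad W := le_csSup hbdd ⟨1, hmem, rfl⟩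
      simp at this
      linarith
    rw [spectrum.notMem_iff] at hone
    have hunitC : IsUnit (1 - Wc) := by
      simpa using hone
    have hdet : IsUnit (1 - W).det := by
      have h1 : ((1 - W).map (algebraMap ℝ ℂ)) = 1 - Wc := by
        rw [hWcdef]
        have := map_sub ((algebraMap ℝ ℂ).mapMatrix) 1 W
        simpa [RingHom.mapMatrix_apply] using this
      have h2 : IsUnit ((1 - W).map (algebraMap ℝ ℂ)).det := by
        rw [h1]
        exact (Matrix.isUnit_iff_isUnit_det _).mp hunitC
      rw [← RingHom.mapMatrix_apply, ← RingHom.map_det] at h2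
      rw [isUnit_iff_ne_zero] at h2 ⊢
      intro h0
      rw [h0] at h2
      simp at h2
    set B : Matrix (Fin n) (Fin n) ℝ := (1 - W)⁻¹ with hBdef
    have hB1 : (1 - W) * B = 1 := Matrix.mul_nonsing_inv _ hdet
    have hB2 : B * (1 - W) = 1 := Matrix.nonsing_inv_mul _ hdet
    have hAiB : Ai = B * Ui := by
      calc Ai = (B * (1 - W)) * Ai := by rw [hB2, one_mul]
        _ = B * ((1 - W) * Ai) := by rw [mul_assoc]
        _ = B * Ui := by rw [k3]
    have hBnn : Nonneg B := by
      intro i j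
      have hSid : ∀ m : ℕ, (∑ k ∈ Finset.range m, W ^ k) = B - W ^ m * B := by
        intro m
        have hgeom : (∑ k ∈ Finset.range m, W ^ k) * (1 - W) = 1 - W ^ m := by
          have := geom_sum_mul W m
          have h2 : (∑ k ∈ Finset.range m, W ^ k) * (1 - W)
              = -((∑ k ∈ Finset.range m, W ^ k) * (W - 1)) := by noncomm_ring
          rw [h2, this]
          abel
        calc (∑ k ∈ Finset.range m, W ^ k)
            = (∑ k ∈ Finset.range m, W ^ k) * ((1 - W) * B) := by rw [hB1, mul_one]
          _ = ((∑ k ∈ Finset.range m, W ^ k) * (1 - W)) * B := by rw [mul_assoc]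
          _ = (1 - W ^ m) * B := by rw [hgeom]
          _ = B - W ^ m * B := by noncomm_ring
      have htail : Tendsto (fun m : ℕ => (W ^ m * B) i j) atTop (𝓝 0) := by
        have hb : ∀ m : ℕ, |(W ^ m * B) i j| ≤ ‖Wc ^ m‖ * ∑ k, |B k j| := by
          intro m
          rw [Matrix.mul_apply, Finset.mul_sum]
          refine (Finset.abs_sum_le_sum_abs _ _).trans (Finset.sum_le_sum fun k _ => ?_)
          rw [abs_mul]
          refine mul_le_mul_of_nonneg_right ?_ (abs_nonneg _)
          have h1 : ‖(Wc ^ m) i k‖ ≤ ‖Wc ^ m‖ := GReg.entry_norm_le _ i k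
          have h2 : (Wc ^ m) i k = (algebraMap ℝ ℂ) ((W ^ m) i k) := by
            rw [hWcdef, GReg.map_pow_entries, Matrix.map_apply]
          rw [h2] at h1
          simpa [Complex.norm_real, Real.norm_eq_abs] using h1
        have hprod : Tendsto (fun m : ℕ => ‖Wc ^ m‖ * ∑ k, |B k j|) atTop (𝓝 0) := by
          have := hWc.mul_const (∑ k, |B k j|)
          simpa using this
        exact squeeze_zero_norm (by simpa using hb) hprod
      have hStend : Tendsto (fun m : ℕ => (∑ k ∈ Finset.range m, W ^ k) i j) atTop
          (𝓝 (B i j)) := by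
        have : (fun m : ℕ => (∑ k ∈ Finset.range m, W ^ k) i j)
            = fun m => B i j - (W ^ m * B) i j := by
          funext m
          rw [hSid m]
          simp [Matrix.sub_apply]
        rw [this]
        simpa using (tendsto_const_nhds (x := B i j)).sub htail
      refine ge_of_tendsto hStend (Eventually.of_forall fun m => ?_)
      rw [Matrix.sum_apply]
      refine Finset.sum_nonneg fun k _ => ?_
      exact GReg.nonneg_pow hW k i j
    rw [hAiB]
    exact GReg.nonneg_mul hBnn hUi

end Aux
end

section
/- Let A = U − V be a proper G-weak regular splitting of a group invertible real n×n matrix A. Then A# ≥ 0 if and only if ρ(U#V) < 1. -/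
open Matrix

/-!
From the splitting and the two group inverses one gets the fixed-point identity
`A# = U# + (U#V) A#`, since `U U#` and `A A#` are both the projector onto `R(A)` along `N(A)`.
Iterating it, `A# = ∑_{k<m} (U#V)^k U# + (U#V)^m A#`, where all terms of the sum are nonnegative.
If `(U#V)^m → 0` this exhibits `A#` as a limit of nonnegative matrices. Conversely, if `A# ≥ 0`
the partial sums are bounded by `A#`, so `(U#V)^m U# → 0` and hence `(U#V)^(m+1) → 0`.
Finally `(U#V)^m → 0` is equivalent to `ρ(U#V) < 1` by Gelfand's formula.
-/

open Filter Topology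
open scoped ENNReal

section BanachAlgebra

variable {A : Type*} [NormedRing A] [NormedAlgebra ℂ A] [CompleteSpace A]

lemma norm_lt_one_of_mem_spectrum_of_tendsto_pow {a : A}
    (ha : Tendsto (a ^ ·) atTop (𝓝 0)) {k : ℂ} (hk : k ∈ spectrum ℂ a) : ‖k‖ < 1 := by
  have hbound (m : ℕ) : ‖k‖ ^ m ≤ ‖a ^ m‖ * ‖(1 : A)‖ := by
    simpa [norm_pow] using spectrum.norm_le_norm_mul_of_mem (spectrum.pow_mem_pow a m hk)
  have hlim : Tendsto (fun m => ‖a ^ m‖ * ‖(1 : A)‖) atTop (𝓝 0) := by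
    simpa using (tendsto_norm_zero.comp ha).mul_const ‖(1 : A)‖
  have hpow : Tendsto (‖k‖ ^ ·) atTop (𝓝 0) :=
    squeeze_zero (fun m => by positivity) hbound hlim
  simpa [abs_of_nonneg (norm_nonneg k)] using tendsto_pow_atTop_nhds_zero_iff.mp hpow

lemma spectralRadius_lt_one_of_tendsto_pow {a : A} (ha : Tendsto (a ^ ·) atTop (𝓝 0)) :
    spectralRadius ℂ a < 1 := by
  rcases (spectrum ℂ a).eq_empty_or_nonempty with hempty | hne
  · simp [spectralRadius, hempty]
  · obtain ⟨k, hk, hrad⟩ := spectrum.exists_nnnorm_eq_spectralRadius_of_nonempty hne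
    rw [← hrad]
    exact_mod_cast norm_lt_one_of_mem_spectrum_of_tendsto_pow ha hk

/-- By Gelfand's formula, `‖a ^ m‖ ≤ c ^ m` eventually, for any `c` above the spectral radius. -/
lemma tendsto_pow_of_spectralRadius_lt_one {a : A} (ha : spectralRadius ℂ a < 1) :
    Tendsto (a ^ ·) atTop (𝓝 0) := by
  obtain ⟨c, hac, hc1⟩ := ENNReal.lt_iff_exists_nnreal_btwn.mp ha
  have hroot :=
    (spectrum.pow_nnnorm_pow_one_div_tendsto_nhds_spectralRadius a).eventually_lt_const hac
  have hbound : ∀ᶠ m : ℕ in atTop, ‖a ^ m‖₊ ≤ c ^ m := by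
    filter_upwards [hroot, eventually_ge_atTop 1] with m hm hm1
    have := ENNReal.rpow_le_rpow hm.le (by positivity : (0 : ℝ) ≤ m)
    rw [← ENNReal.rpow_mul, one_div_mul_cancel (by positivity), ENNReal.rpow_one,
      ENNReal.rpow_natCast] at this
    exact_mod_cast this
  refine tendsto_zero_iff_norm_tendsto_zero.mpr <|
    squeeze_zero' (.of_forall fun _ => norm_nonneg _) ?_
      (tendsto_pow_atTop_nhds_zero_of_lt_one c.coe_nonneg (by exact_mod_cast hc1))
  filter_upwards [hbound] with m hm
  exact_mod_cast hm

theorem spectralRadius_lt_one_iff_tendsto_pow (a : A) :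
    spectralRadius ℂ a < 1 ↔ Tendsto (a ^ ·) atTop (𝓝 0) :=
  ⟨tendsto_pow_of_spectralRadius_lt_one, spectralRadius_lt_one_of_tendsto_pow⟩

end BanachAlgebra

lemma spectralRadius_lt_one_iff_of_finite {𝕜 A : Type*} [NormedField 𝕜] [Ring A] [Algebra 𝕜 A]
    {a : A} (hfin : (spectrum 𝕜 a).Finite) :
    spectralRadius 𝕜 a < 1 ↔ ∀ k ∈ spectrum 𝕜 a, ‖k‖ < 1 := by
  refine ⟨fun h k hk => ?_, fun h => ?_⟩
  · have : (‖k‖₊ : ℝ≥0∞) < 1 :=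
      (le_iSup₂ (f := fun k (_ : k ∈ spectrum 𝕜 a) => (‖k‖₊ : ℝ≥0∞)) k hk).trans_lt h
    exact_mod_cast this
  · have hsup : hfin.toFinset.sup (‖·‖₊) < 1 :=
      (Finset.sup_lt_iff (by simp)).2 fun k hk => by exact_mod_cast h k (hfin.mem_toFinset.1 hk)
    refine lt_of_le_of_lt (iSup₂_le fun k hk => ?_) (ENNReal.coe_lt_one_iff.2 hsup)
    exact ENNReal.coe_le_coe.2 (Finset.le_sup (f := (‖·‖₊)) (hfin.mem_toFinset.2 hk))

section SpecRad

variable {n : ℕ}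

lemma specRad_lt_one_iff (T : Matrix (Fin n) (Fin n) ℝ) :
    specRad T < 1 ↔ ∀ k ∈ spectrum ℂ (T.map (algebraMap ℝ ℂ)), ‖k‖ < 1 := by
  rcases (spectrum ℂ (T.map (algebraMap ℝ ℂ))).eq_empty_or_nonempty with hempty | hne
  · rw [specRad, hempty]
    simp
  · rw [specRad, ((finite_spectrum _).image _).csSup_lt_iff (hne.image _), Set.forall_mem_image]

lemma tendsto_pow_map_ofReal_iff (T : Matrix (Fin n) (Fin n) ℝ) :
    Tendsto (fun m => T.map (algebraMap ℝ ℂ) ^ m) atTop (𝓝 0) ↔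
      Tendsto (T ^ ·) atTop (𝓝 0) := by
  simp_rw [← Matrix.map_pow]
  rw [(Topology.IsInducing.matrix_map
    Complex.isometry_ofReal.isEmbedding.isInducing).tendsto_nhds_iff]
  simp [Function.comp_def]

theorem specRad_lt_one_iff_tendsto_pow (T : Matrix (Fin n) (Fin n) ℝ) :
    specRad T < 1 ↔ Tendsto (T ^ ·) atTop (𝓝 0) := by
  let _ := Matrix.linftyOpNormedRing (n := Fin n) (α := ℂ)
  let _ := Matrix.linftyOpNormedAlgebra (n := Fin n) (α := ℂ) (R := ℂ)
  have : CompleteSpace (Matrix (Fin n) (Fin n) ℂ) := FiniteDimensional.complete ℂ _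
  rw [specRad_lt_one_iff, ← spectralRadius_lt_one_iff_of_finite (finite_spectrum _),
    spectralRadius_lt_one_iff_tendsto_pow]
  exact tendsto_pow_map_ofReal_iff T

end SpecRad

section GroupInverse

variable {m R : Type*} [Fintype m] [CommRing R]

lemma mul_mul_eq_of_range_le {A X B : Matrix m m R} (hA : A * X * A = A)
    (h : LinearMap.range B.mulVecLin ≤ LinearMap.range A.mulVecLin) : A * X * B = B := by
  refine ext_iff_mulVec.2 fun x => ?_
  obtain ⟨y, hy⟩ := h ⟨x, rfl⟩
  simp only [mulVecLin_apply] at hy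
  rw [← mulVec_mulVec, ← hy, mulVec_mulVec, hA]

lemma mul_mul_eq_of_ker_le {A U Y : Matrix m m R} (hU : U * Y * U = U)
    (h : LinearMap.ker U.mulVecLin ≤ LinearMap.ker A.mulVecLin) : A * Y * U = A := by
  refine ext_iff_mulVec.2 fun x => ?_
  have hx : x - (Y * U) *ᵥ x ∈ LinearMap.ker U.mulVecLin := by
    rw [LinearMap.mem_ker, mulVecLin_apply, mulVec_sub, mulVec_mulVec, ← mul_assoc, hU, sub_self]
  have hAx := h hx
  rw [LinearMap.mem_ker, mulVecLin_apply, mulVec_sub, mulVec_mulVec, sub_eq_zero] at hAx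
  rw [mul_assoc, hAx]

end GroupInverse

namespace ProperSplitting

variable {n : ℕ} {A U V Ai Ui : Matrix (Fin n) (Fin n) ℝ}

/-- Both sides are the projector onto `R(A) = R(U)` along `N(A) = N(U)`. -/
lemma mul_groupInv_eq_s12 (hs : ProperSplitting A U V) (hA : IsGroupInv A Ai)
    (hU : IsGroupInv U Ui) : U * Ui = A * Ai := by
  obtain ⟨-, hrange, hker⟩ := hs
  have hAU : A * Ai * U = U := mul_mul_eq_of_range_le hA.1 hrange.le
  have hUA : A * Ui * U = A := mul_mul_eq_of_ker_le hU.1 hker.le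
  calc U * Ui = A * Ai * (U * Ui) := by rw [← mul_assoc, hAU]
    _ = Ai * (A * Ui * U) := by rw [hU.2.2, hA.2.2]; simp only [mul_assoc]
    _ = A * Ai := by rw [hUA, hA.2.2]

lemma groupInv_eq_add (hs : ProperSplitting A U V) (hA : IsGroupInv A Ai)
    (hU : IsGroupInv U Ui) : Ai = Ui + Ui * V * Ai := by
  have hP := hs.mul_groupInv_eq_s12 hA hU
  have hUAi : Ui * U * Ai = Ai := by rw [← hU.2.2, hP, hA.2.2, hA.2.1]
  have hUiA : Ui * A * Ai = Ui := by rw [mul_assoc, ← hP, ← mul_assoc, hU.2.1]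
  rw [show V = U - A by rw [hs.1, sub_sub_cancel], mul_sub, sub_mul, hUAi, hUiA]
  abel

end ProperSplitting

lemma eq_sum_pow_mul_add_pow_mul {R : Type*} [Semiring R] {x u t : R} (h : x = u + t * x)
    (m : ℕ) : x = (∑ k ∈ Finset.range m, t ^ k * u) + t ^ m * x := by
  induction m with
  | zero => simp
  | succ m ih =>
    conv_lhs => rw [ih]
    conv_lhs => rw [h]
    rw [Finset.sum_range_succ, pow_succ, mul_add, mul_assoc, add_assoc]

section Nonneg

variable {n : ℕ} {B T V X : Matrix (Fin n) (Fin n) ℝ}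

lemma nonneg_mul (hB : Nonneg B) (hT : Nonneg T) : Nonneg (B * T) := fun i j => by
  rw [mul_apply]
  exact Finset.sum_nonneg fun k _ => mul_nonneg (hB i k) (hT k j)

lemma nonneg_pow (hT : Nonneg T) (m : ℕ) : Nonneg (T ^ m) := by
  induction m with
  | zero => exact fun i j => by by_cases h : i = j <;> simp [one_apply, h]
  | succ m ih => rw [pow_succ]; exact nonneg_mul ih hT

lemma sum_pow_mul_apply_add_pow_mul_apply (hX : X = B + T * X) (m : ℕ) (i j : Fin n) :
    (∑ k ∈ Finset.range m, (T ^ k * B) i j) + (T ^ m * X) i j = X i j := by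
  conv_rhs => rw [eq_sum_pow_mul_add_pow_mul hX m]
  rw [Matrix.add_apply, Matrix.sum_apply]

lemma nonneg_of_tendsto_pow (hB : Nonneg B) (hT : Nonneg T) (hX : X = B + T * X)
    (hT0 : Tendsto (T ^ ·) atTop (𝓝 0)) : Nonneg X := by
  intro i j
  have hlim : Tendsto (fun m => (T ^ m * X) i j) atTop (𝓝 0) := by
    have := hT0.mul_const X
    rw [zero_mul] at this
    exact tendsto_pi_nhds.1 (tendsto_pi_nhds.1 this i) j
  refine le_of_tendsto' hlim fun m => ?_
  have hsum := Finset.sum_nonneg fun k (_ : k ∈ Finset.range m) =>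
    nonneg_mul (nonneg_pow hT k) hB i j
  linarith [sum_pow_mul_apply_add_pow_mul_apply hX m i j]

lemma tendsto_pow_mul_of_nonneg (hB : Nonneg B) (hT : Nonneg T) (hX : X = B + T * X)
    (hXnn : Nonneg X) : Tendsto (fun m => T ^ m * B) atTop (𝓝 0) := by
  refine tendsto_pi_nhds.2 fun i => tendsto_pi_nhds.2 fun j => ?_
  have hterm (k : ℕ) : 0 ≤ (T ^ k * B) i j := nonneg_mul (nonneg_pow hT k) hB i j
  refine (summable_of_sum_range_le (c := X i j) hterm fun m => ?_).tendsto_atTop_zero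
  linarith [sum_pow_mul_apply_add_pow_mul_apply hX m i j, nonneg_mul (nonneg_pow hT m) hXnn i j]

lemma tendsto_pow_of_nonneg_of_eq_add (hB : Nonneg B) (hBV : Nonneg (B * V))
    (hX : X = B + B * V * X) (hXnn : Nonneg X) : Tendsto ((B * V) ^ ·) atTop (𝓝 0) := by
  have := (tendsto_pow_mul_of_nonneg hB hBV hX hXnn).mul_const V
  rw [zero_mul] at this
  refine (tendsto_add_atTop_iff_nat 1).1 ?_
  simpa only [pow_succ, mul_assoc] using this

end Nonneg

theorem G_weak_regular_convergence {n : ℕ} (A U V Ai Ui : Matrix (Fin n) (Fin n) ℝ)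
    (hs : ProperSplitting A U V) (hA : IsGroupInv A Ai) (hU : IsGroupInv U Ui)
    (hUi : Nonneg Ui) (hUV : Nonneg (Ui * V)) :
    Nonneg Ai ↔ specRad (Ui * V) < 1 := by
  have hfix := hs.groupInv_eq_add hA hU
  rw [specRad_lt_one_iff_tendsto_pow]
  exact ⟨tendsto_pow_of_nonneg_of_eq_add hUi hUV hfix, nonneg_of_tendsto_pow hUi hUV hfix⟩
end

section
/- Let A = K − L = U − V = X − Y be three proper G-weak regular splittings of a group monotone matrix A, and let H = X#YU#VK#L. Then (I − H)A# = X#YU# + X# + X#YU#VK# ≥ 0 entrywise. -/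
open Matrix

/-!
For a proper splitting `A = K - L`, the matrices `K` and `A` have the same range and kernel, so
their spectral projectors agree: `K K# = A A#`. This gives `K# L A# = A# - K#`, and applying it
to the three splittings in turn telescopes `(I - H) A#`; each resulting term is a product of the
nonnegative matrices `X#`, `X#Y`, `U#`, `U#V`, `K#`.
-/

section InnerInverse

variable {m R : Type*} [Fintype m] [CommRing R] {A G K : Matrix m m R}

theorem Matrix.mul_mul_eq_right_of_range_le (hA : A * G * A = A)
    (hr : LinearMap.range K.mulVecLin ≤ LinearMap.range A.mulVecLin) : A * G * K = K := by
  refine ext_iff_mulVec.mpr fun x => ?_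
  obtain ⟨y, hy⟩ := hr ⟨x, rfl⟩
  simp only [mulVecLin_apply] at hy
  rw [← mulVec_mulVec, ← hy, mulVec_mulVec, hA]

theorem Matrix.mul_mul_eq_left_of_ker_le (hK : K * G * K = K)
    (hk : LinearMap.ker K.mulVecLin ≤ LinearMap.ker A.mulVecLin) : A * G * K = A := by
  refine ext_iff_mulVec.mpr fun x => ?_
  have hx : x - (G * K) *ᵥ x ∈ LinearMap.ker K.mulVecLin := by
    rw [LinearMap.mem_ker, mulVecLin_apply, mulVec_sub, mulVec_mulVec, ← Matrix.mul_assoc, hK,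
      sub_self]
  have hAx := hk hx
  rw [LinearMap.mem_ker, mulVecLin_apply, mulVec_sub, sub_eq_zero] at hAx
  rw [Matrix.mul_assoc, ← mulVec_mulVec, hAx]

end InnerInverse

section GroupInverse

variable {n : ℕ} {A Ai K L Ki : Matrix (Fin n) (Fin n) ℝ}

theorem IsGroupInv.mul_eq_mul_of_range_le_of_ker_le (hA : IsGroupInv A Ai) (hK : IsGroupInv K Ki)
    (hr : LinearMap.range K.mulVecLin ≤ LinearMap.range A.mulVecLin)
    (hk : LinearMap.ker K.mulVecLin ≤ LinearMap.ker A.mulVecLin) :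
    K * Ki = A * Ai := by
  obtain ⟨hA₁, -, hA₃⟩ := hA
  obtain ⟨hK₁, -, hK₃⟩ := hK
  calc K * Ki = A * Ai * (K * Ki) := by
        rw [← Matrix.mul_assoc, mul_mul_eq_right_of_range_le hA₁ hr]
    _ = Ai * (A * Ki * K) := by simp only [hA₃, hK₃, Matrix.mul_assoc]
    _ = A * Ai := by rw [mul_mul_eq_left_of_ker_le hK₁ hk, hA₃]

theorem ProperSplitting.groupInv_mul_mul_groupInv (hs : ProperSplitting A K L)
    (hA : IsGroupInv A Ai) (hK : IsGroupInv K Ki) : Ki * L * Ai = Ai - Ki := by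
  obtain ⟨hAKL, hr, hk⟩ := hs
  have hP : K * Ki = A * Ai := hA.mul_eq_mul_of_range_le_of_ker_le hK hr.le hk.le
  obtain ⟨-, hA₂, hA₃⟩ := hA
  obtain ⟨-, hK₂, hK₃⟩ := hK
  have hKA : Ki * K * Ai = Ai := by rw [← hK₃, hP, hA₃, hA₂]
  have hAK : Ki * A * Ai = Ki := by rw [Matrix.mul_assoc, ← hP, ← Matrix.mul_assoc, hK₂]
  calc Ki * L * Ai = Ki * K * Ai - Ki * A * Ai := by
        rw [hAKL, Matrix.mul_sub, Matrix.sub_mul, sub_sub_cancel]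
    _ = Ai - Ki := by rw [hKA, hAK]

end GroupInverse

theorem one_sub_mul_eq_of_telescope {R : Type*} [Ring R] {a k l u v x y : R}
    (hk : k * l * a = a - k) (hu : u * v * a = a - u) (hx : x * y * a = a - x) :
    (1 - x * y * u * v * k * l) * a = x * y * u + x + x * y * u * v * k :=
  calc (1 - x * y * u * v * k * l) * a = a - x * y * u * v * (k * l * a) := by noncomm_ring
    _ = a - x * y * (u * v * a) + x * y * u * v * k := by rw [hk]; noncomm_ring
    _ = a - x * y * a + x * y * u + x * y * u * v * k := by rw [hu]; noncomm_ring
    _ = x * y * u + x + x * y * u * v * k := by rw [hx]; noncomm_ring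

theorem Nonneg.matrix_mul {n : ℕ} {M N : Matrix (Fin n) (Fin n) ℝ} (hM : Nonneg M) (hN : Nonneg N) :
    Nonneg (M * N) := fun i j => by
  rw [mul_apply]
  exact Finset.sum_nonneg fun k _ => mul_nonneg (hM i k) (hN k j)

theorem Nonneg.matrix_add {n : ℕ} {M N : Matrix (Fin n) (Fin n) ℝ} (hM : Nonneg M) (hN : Nonneg N) :
    Nonneg (M + N) := fun i j => add_nonneg (hM i j) (hN i j)

theorem three_step_identity_general {n : ℕ}
    (A K L U V X Y Ai Ki Ui Xi : Matrix (Fin n) (Fin n) ℝ)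
    (hA : IsGroupInv A Ai)
    (hsK : ProperSplitting A K L) (hK : IsGroupInv K Ki)
    (hKi : Nonneg Ki)
    (hsU : ProperSplitting A U V) (hU : IsGroupInv U Ui)
    (hUi : Nonneg Ui) (hUV : Nonneg (Ui * V))
    (hsX : ProperSplitting A X Y) (hX : IsGroupInv X Xi)
    (hXi : Nonneg Xi) (hXY : Nonneg (Xi * Y)) :
    (1 - Xi * Y * Ui * V * Ki * L) * Ai
      = Xi * Y * Ui + Xi + Xi * Y * Ui * V * Ki ∧
    Nonneg ((1 - Xi * Y * Ui * V * Ki * L) * Ai) := by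
  have hEq := one_sub_mul_eq_of_telescope (hsK.groupInv_mul_mul_groupInv hA hK)
    (hsU.groupInv_mul_mul_groupInv hA hU) (hsX.groupInv_mul_mul_groupInv hA hX)
  have hH : Nonneg (Xi * Y * (Ui * V) * Ki) := (hXY.matrix_mul hUV).matrix_mul hKi
  rw [← Matrix.mul_assoc] at hH
  exact ⟨hEq, hEq ▸ ((hXY.matrix_mul hUi).matrix_add hXi).matrix_add hH⟩

theorem three_step_identity {n : ℕ}
    (A K L U V X Y Ai Ki Ui Xi : Matrix (Fin n) (Fin n) ℝ)
    (hA : IsGroupInv A Ai) (hAi : Nonneg Ai)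
    (hsK : ProperSplitting A K L) (hK : IsGroupInv K Ki)
    (hKi : Nonneg Ki) (hKL : Nonneg (Ki * L))
    (hsU : ProperSplitting A U V) (hU : IsGroupInv U Ui)
    (hUi : Nonneg Ui) (hUV : Nonneg (Ui * V))
    (hsX : ProperSplitting A X Y) (hX : IsGroupInv X Xi)
    (hXi : Nonneg Xi) (hXY : Nonneg (Xi * Y)) :
    (1 - Xi * Y * Ui * V * Ki * L) * Ai
      = Xi * Y * Ui + Xi + Xi * Y * Ui * V * Ki ∧
    Nonneg ((1 - Xi * Y * Ui * V * Ki * L) * Ai) :=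
  three_step_identity_general A K L U V X Y Ai Ki Ui Xi hA hsK hK hKi hsU hU hUi hUV hsX hX hXi hXY
end
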